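/- arXiv:1907.13217 — 5 statements merged into one kernel-verified Lean document; each statement's English description precedes it below -/
import Mathlib

section
/- Let $K = \mathbb{F}_q$ be a finite field, let $\mathbb{A}^s = K^s$, and let $G$ be a finite set of polynomials of $S = K[t_1,\ldots,t_s]$. If $X = V_{\mathbb{A}^s}(G)$ and $(I(\mathbb{A}^s) : (G)) \neq I(\mathbb{A}^s)$, then $(t_1^q - t_1, \ldots, t_s^q - t_s, G) = I(X)$. -/
open MvPolynomial
open scoped MonomialOrder

variable {K : Type*} [Field K] {s : ℕ}

/-- The exponent of the initial (leading) monomial of `f` with respect to the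
monomial order `m` (it is `0` for `f = 0`). -/
noncomputable def leadExp (m : MonomialOrder (Fin s)) (f : MvPolynomial (Fin s) K) :
    Fin s →₀ ℕ :=
  m.toSyn.symm (f.support.sup fun a => m.toSyn a)

/-- The coefficient of the initial monomial of `f`; `f` is monic when this is `1`. -/
noncomputable def leadCoeff (m : MonomialOrder (Fin s)) (f : MvPolynomial (Fin s) K) : K :=
  f.coeff (leadExp m f)

/-- The initial monomial `in_≺(f)` of `f`, as a (monic) monomial of the polynomial ring. -/
noncomputable def leadMon (m : MonomialOrder (Fin s)) (f : MvPolynomial (Fin s) K) :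
    MvPolynomial (Fin s) K :=
  monomial (leadExp m f) (1 : K)

/-- The initial ideal `in_≺(I)` of an ideal `I`: the ideal generated by the initial
monomials of the nonzero elements of `I`. -/
noncomputable def initialIdeal (m : MonomialOrder (Fin s)) (I : Ideal (MvPolynomial (Fin s) K)) :
    Ideal (MvPolynomial (Fin s) K) :=
  Ideal.span { g | ∃ f ∈ I, f ≠ 0 ∧ g = leadMon m f }

/-- The footprint `Δ_≺(I)` of `S/I`: the set of standard monomials, i.e. the (monic)
monomials that do not belong to the initial ideal of `I`. -/
noncomputable def stdMonomials (m : MonomialOrder (Fin s)) (I : Ideal (MvPolynomial (Fin s) K)) :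
    Set (MvPolynomial (Fin s) K) :=
  { g | (∃ a : Fin s →₀ ℕ, g = monomial a (1 : K)) ∧ g ∉ initialIdeal m I }

/-- `KΔ_≺(I)`, the `K`-linear span of the standard monomials of `S/I`. -/
noncomputable def stdSpan (m : MonomialOrder (Fin s)) (I : Ideal (MvPolynomial (Fin s) K)) :
    Submodule K (MvPolynomial (Fin s) K) :=
  Submodule.span K (stdMonomials m I)

/-- A monomial order is graded if monomials are first compared by their total degrees. -/
def IsGradedOrder (m : MonomialOrder (Fin s)) : Prop :=
  ∀ a b : Fin s →₀ ℕ, a.degree < b.degree → a ≺[m] b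

/-- The vanishing ideal `I(X)` of a set of points `X ⊆ 𝔸^s = K^s`. -/
def affVanishingIdeal (X : Set (Fin s → K)) : Ideal (MvPolynomial (Fin s) K) where
  carrier := { f | ∀ x ∈ X, eval x f = 0 }
  add_mem' := by
    intro a b ha hb x hx
    simp [ha x hx, hb x hx]
  zero_mem' := by intro x hx; simp
  smul_mem' := by
    intro c f hf x hx
    simp [smul_eq_mul, hf x hx]

/-- The evaluation map `S → K^X`, `f ↦ (f(P₁),…,f(P_m))`, at the points of a finite
set `X` of points of `𝔸^s`. -/
noncomputable def evalMap (X : Finset (Fin s → K)) :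
    MvPolynomial (Fin s) K →ₗ[K] (X → K) where
  toFun f := fun x => eval (x : Fin s → K) f
  map_add' f g := by funext x; simp
  map_smul' c f := by funext x; simp [Algebra.smul_def]

/-- The degree `deg(S/I)`.  For the ideals considered in this paper `S/I` is a
zero-dimensional ring, and its degree (the normalized leading coefficient of the
affine Hilbert polynomial) equals `dim_K (S/I)` (and is `0` when `I = S`). -/
noncomputable def adeg (I : Ideal (MvPolynomial (Fin s) K)) : ℕ :=
  Module.finrank K (MvPolynomial (Fin s) K ⧸ I)

/-- The affine Hilbert function `H_I^a(d) = dim_K (S_{≤d}/I_{≤d})`, computed as the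
dimension of the image of `S_{≤d}` in `S/I`. -/
noncomputable def affineHilbert (I : Ideal (MvPolynomial (Fin s) K)) (d : ℕ) : ℕ :=
  Module.finrank K
    ((restrictTotalDegree (Fin s) K d).map (Submodule.restrictScalars K I).mkQ)

/-- The support `χ(D)` of a subcode `D ⊆ K^ι`. -/
def codeSupport {ι : Type*} (D : Submodule K (ι → K)) : Set ι :=
  { i | ∃ v ∈ D, v i ≠ 0 }

/-- The `r`-th generalized Hamming weight of a linear code `C ⊆ K^ι`: the minimum
size of the support of an `r`-dimensional subcode. -/
noncomputable def ghw {ι : Type*} (C : Submodule K (ι → K)) (r : ℕ) : ℕ :=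
  sInf { n | ∃ D : Submodule K (ι → K),
    D ≤ C ∧ Module.finrank K (↥D) = r ∧ (codeSupport D).ncard = n }

/-- The minimum distance of a linear code: the least Hamming weight of a nonzero
codeword. -/
noncomputable def minDist {ι : Type*} (C : Submodule K (ι → K)) : ℕ :=
  sInf { n | ∃ v ∈ C, v ≠ 0 ∧ ({ i : ι | v i ≠ 0 }).ncard = n }

/-- The affine torus `T = (K^*)^s`. -/
noncomputable def torus (K : Type*) [Field K] [Fintype K] (s : ℕ) : Finset (Fin s → K) :=
  letI := Classical.decEq K
  Finset.univ.filter fun x => ∀ i, x i ≠ 0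

/-- `V_d`: the set of squarefree (monic) monomials of degree `d`. -/
def sqfreeMonomials (K : Type*) [Field K] (s d : ℕ) : Set (MvPolynomial (Fin s) K) :=
  { g | ∃ a : Fin s →₀ ℕ, (∀ i, a i ≤ 1) ∧ a.degree = d ∧ g = monomial a (1 : K) }

/-- `V_{≤d}`: the set of squarefree (monic) monomials of degree at most `d`. -/
def sqfreeMonomialsLe (K : Type*) [Field K] (s d : ℕ) : Set (MvPolynomial (Fin s) K) :=
  { g | ∃ a : Fin s →₀ ℕ, (∀ i, a i ≤ 1) ∧ a.degree ≤ d ∧ g = monomial a (1 : K) }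

/-! The field equations `t_i^q - t_i` generate `I(𝔸^s)`: this is the combinatorial
Nullstellensatz with every coordinate ranging over all of `K`, since
`∏_{a ∈ K} (t - a) = t^q - t`. By Fermat, `u = ∏_{g ∈ G} (1 - g^(q-1))` is the indicator
function of `X = V(G)`, while `u ≡ 1` modulo `(G)`. Hence for `f ∈ I(X)` the product `f u`
vanishes on all of `𝔸^s`, and `f = f u + f (1 - u)` lies in `(t^q - t, G)`. -/

theorem Ideal.one_sub_prod_one_sub_mem {R ι : Type*} [CommRing R] {I : Ideal R} {t : Finset ι}
    {f : ι → R} (hf : ∀ i ∈ t, f i ∈ I) : 1 - ∏ i ∈ t, (1 - f i) ∈ I := by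
  rw [← Ideal.Quotient.eq_zero_iff_mem, map_sub, map_one, map_prod, sub_eq_zero, eq_comm]
  refine Finset.prod_eq_one fun i hi => ?_
  rw [map_sub, map_one, Ideal.Quotient.eq_zero_iff_mem.mpr (hf i hi), sub_zero]

theorem FiniteField.prod_X_sub_C_eq_X_pow_card_sub_X [Fintype K] :
    ∏ a : K, (Polynomial.X - Polynomial.C a) =
      (Polynomial.X ^ Fintype.card K - Polynomial.X : Polynomial K) := by
  have hmonic : (Polynomial.X ^ Fintype.card K - Polynomial.X : Polynomial K).Monic :=
    Polynomial.monic_X_pow_sub (by simpa using Fintype.one_lt_card)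
  have h := Polynomial.prod_multiset_X_sub_C_of_monic_of_roots_card_eq hmonic (by
    rw [FiniteField.roots_X_pow_card_sub_X,
      FiniteField.X_pow_card_sub_X_natDegree_eq K Fintype.one_lt_card]
    rfl)
  rwa [FiniteField.roots_X_pow_card_sub_X] at h

namespace MvPolynomial

variable {σ : Type*} [Fintype K]

theorem prod_X_sub_C_eq_X_pow_card_sub_X (i : σ) :
    ∏ a : K, (X i - C a : MvPolynomial σ K) = X i ^ Fintype.card K - X i := by
  have h := congrArg (Polynomial.aeval (R := K) (X i : MvPolynomial σ K))
    FiniteField.prod_X_sub_C_eq_X_pow_card_sub_X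
  simpa only [map_prod, map_sub, map_pow, Polynomial.aeval_X, Polynomial.aeval_C,
    algebraMap_eq] using h

theorem eval_X_pow_card_sub_X (x : σ → K) (i : σ) :
    eval x (X i ^ Fintype.card K - X i) = 0 := by
  simp [FiniteField.pow_card]

theorem mem_span_X_pow_card_sub_X_of_eval_eq_zero [Finite σ] {f : MvPolynomial σ K}
    (hf : ∀ x : σ → K, eval x f = 0) :
    f ∈ Ideal.span (Set.range fun i : σ => X i ^ Fintype.card K - X i) := by
  obtain ⟨c, -, rfl⟩ := combinatorial_nullstellensatz_exists_linearCombination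
    (fun _ => Finset.univ) (fun _ => Finset.univ_nonempty) f (fun x _ => hf x)
  simp only [prod_X_sub_C_eq_X_pow_card_sub_X]
  exact Finsupp.mem_span_range_iff_exists_finsupp.mpr ⟨c, rfl⟩

open Classical in
theorem eval_prod_one_sub_pow_card_sub_one (G : Finset (MvPolynomial σ K)) (x : σ → K) :
    eval x (∏ g ∈ G, (1 - g ^ (Fintype.card K - 1))) =
      if ∀ g ∈ G, eval x g = 0 then 1 else 0 := by
  rw [map_prod]
  split_ifs with hx
  · refine Finset.prod_eq_one fun g hg => ?_
    rw [map_sub, map_one, map_pow, hx g hg,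
      zero_pow (Nat.sub_pos_of_lt Fintype.one_lt_card).ne', sub_zero]
  · obtain ⟨g, hg, hgx⟩ := not_forall₂.mp hx
    refine Finset.prod_eq_zero hg ?_
    rw [map_sub, map_one, map_pow, FiniteField.pow_card_sub_one_eq_one _ hgx, sub_self]

end MvPolynomial

theorem nullstellensatz_finite_field_general [Fintype K] (G : Finset (MvPolynomial (Fin s) K)) :
    Ideal.span ((Set.range fun j : Fin s =>
        (X j : MvPolynomial (Fin s) K) ^ Fintype.card K - X j) ∪
        (G : Set (MvPolynomial (Fin s) K))) =
      affVanishingIdeal { x : Fin s → K | ∀ g ∈ G, eval x g = 0 } := by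
  refine le_antisymm ?_ fun f hf => ?_
  · rw [Ideal.span_le]
    rintro f (⟨i, rfl⟩ | hfG) x hx
    · exact eval_X_pow_card_sub_X x i
    · exact hx f hfG
  · set u := ∏ g ∈ G, (1 - g ^ (Fintype.card K - 1))
    have hfu : f * u ∈ Ideal.span (Set.range fun j : Fin s =>
        (X j : MvPolynomial (Fin s) K) ^ Fintype.card K - X j) := by
      refine mem_span_X_pow_card_sub_X_of_eval_eq_zero fun x => ?_
      rw [map_mul, eval_prod_one_sub_pow_card_sub_one]
      split_ifs with hx
      · rw [hf x hx, zero_mul]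
      · rw [mul_zero]
    have hu : 1 - u ∈ Ideal.span (G : Set (MvPolynomial (Fin s) K)) :=
      Ideal.one_sub_prod_one_sub_mem fun g hg => Ideal.pow_mem_of_mem _ (Ideal.subset_span hg) _
        (Nat.sub_pos_of_lt Fintype.one_lt_card)
    rw [show f = f * u + f * (1 - u) by ring]
    exact add_mem (Ideal.span_mono Set.subset_union_left hfu)
      (Ideal.mul_mem_left _ f (Ideal.span_mono Set.subset_union_right hu))

/-- Proposition (Hilbert's Nullstellensatz over a finite field): if
`X = V_{𝔸^s}(G)` and `(I(𝔸^s) : (G)) ≠ I(𝔸^s)`, then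
`(t₁^q - t₁, …, t_s^q - t_s, G) = I(X)`. -/
theorem nullstellensatz_finite_field [Fintype K] (G : Finset (MvPolynomial (Fin s) K))
    (hcol : Submodule.colon (affVanishingIdeal (Set.univ : Set (Fin s → K)))
        (Ideal.span (G : Set (MvPolynomial (Fin s) K))) ≠
      affVanishingIdeal (Set.univ : Set (Fin s → K))) :
    Ideal.span ((Set.range fun j : Fin s =>
        (X j : MvPolynomial (Fin s) K) ^ Fintype.card K - X j) ∪
        (G : Set (MvPolynomial (Fin s) K))) =
      affVanishingIdeal { x : Fin s → K | ∀ g ∈ G, eval x g = 0 } :=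
  nullstellensatz_finite_field_general G
end

section
/- Let $\mathbb{P}^{s-1}$ be the projective space over a finite field $K = \mathbb{F}_q$, let $\mathbb{X} = V_{\mathbb{P}^{s-1}}(G)$ be the projective variety defined by a finite set $G$ of nonzero homogeneous polynomials of $S = K[t_1,\ldots,t_s]$, and let $I(\mathbb{X})$ be the homogeneous vanishing ideal of $\mathbb{X}$. If $(I(\mathbb{P}^{s-1}) : (G)) \neq I(\mathbb{P}^{s-1})$, then $\mathrm{rad}(\{t_i t_j^q - t_i^q t_j \mid 1 \le i < j \le s\},\ G) = I(\mathbb{X})$. -/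
open MvPolynomial
open scoped MonomialOrder

variable {K : Type*} [Field K] {s : ℕ}

/-- The homogeneous vanishing ideal of a set `Y` of (representatives of) projective
points: the ideal generated by the homogeneous polynomials vanishing on `Y`. -/
noncomputable def projVanishingIdeal (Y : Set (Fin s → K)) :
    Ideal (MvPolynomial (Fin s) K) :=
  Ideal.span { f | (∃ n, f.IsHomogeneous n) ∧ ∀ x ∈ Y, eval x f = 0 }

/-!
Membership in `I(Y)` can be tested on lines: a homogeneous `f` of degree `n` restricts to the
line through `x` as `f(T·x) = Tⁿ f(x) ∈ K[T]`, so `I(Y)` is the intersection of the kernels of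
these restrictions for `x ∈ Y`. Hence `I(𝕏)` is radical, and it contains the binomials (as
`c^q = c` on `K`) and `G`. The same description shows that `𝕏 = ∅` would force
`(I(ℙ^{s-1}) : (G)) = I(ℙ^{s-1})`.

Conversely let `P ⊇ (binomials, G)` be prime. If some `t_k ∉ P`, the binomials say that each
`t_i/t_k` is a root of `X^q - X` in the fraction field of `S/P`, hence lies in `K`: modulo `P`
the variables are `t_k · p` for a point `p ≠ 0`, which lies on `𝕏` because `G ⊆ P`. If all
`t_i ∈ P`, the same holds with `0` in place of `t_k` and any point of `𝕏`. Either way a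
homogeneous `f ∈ I(𝕏)` of degree `n` is `tⁿ f(p) = 0` modulo `P`.
-/

namespace MvPolynomial

section Homogeneous

variable {σ R A : Type*} [CommSemiring R] [CommSemiring A] [Algebra R A]
  {f : MvPolynomial σ R} {n : ℕ}

theorem IsHomogeneous.aeval_mul (hf : f.IsHomogeneous n) (t : A) (x : σ → A) :
    MvPolynomial.aeval (fun i => t * x i) f = t ^ n * MvPolynomial.aeval x f := by
  rw [aeval_def, aeval_def, eval₂_eq, eval₂_eq, Finset.mul_sum]
  refine Finset.sum_congr rfl fun v hv => ?_
  have hv : ∑ i ∈ v.support, v i = n := (hf.degree_eq_sum_deg_support hv).symm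
  simp only [mul_pow, Finset.prod_mul_distrib, Finset.prod_pow_eq_pow_sum, hv]
  ring

theorem IsHomogeneous.map_eq_pow_mul_algebraMap (hf : f.IsHomogeneous n)
    (φ : MvPolynomial σ R →ₐ[R] A) {t : A} {p : σ → R}
    (hφ : ∀ i, φ (X i) = t * algebraMap R A (p i)) :
    φ f = t ^ n * algebraMap R A (eval p f) := by
  rw [aeval_unique φ, show φ ∘ X = fun i => t * algebraMap R A (p i) from _root_.funext hφ,
    hf.aeval_mul, ← Function.comp_def, aeval_algebraMap_apply]
  rfl

end Homogeneous

section LineEval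

variable {σ R : Type*} [CommSemiring R]

noncomputable def lineEval (x : σ → R) : MvPolynomial σ R →ₐ[R] Polynomial R :=
  aeval fun i => Polynomial.X * Polynomial.C (x i)

theorem lineEval_of_isHomogeneous {f : MvPolynomial σ R} {n : ℕ} (hf : f.IsHomogeneous n)
    (x : σ → R) : lineEval x f = Polynomial.X ^ n * Polynomial.C (eval x f) :=
  hf.map_eq_pow_mul_algebraMap (lineEval x) fun i => aeval_X _ i

theorem coeff_lineEval (x : σ → R) (f : MvPolynomial σ R) (d : ℕ) :
    (lineEval x f).coeff d = eval x (homogeneousComponent d f) := by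
  induction f using MvPolynomial.induction_on' with
  | monomial v c =>
    have hv := isHomogeneous_monomial c (rfl : v.degree = v.degree)
    rw [lineEval_of_isHomogeneous hv, mul_comm, Polynomial.coeff_C_mul_X_pow,
      homogeneousComponent_of_mem ((mem_homogeneousSubmodule _ _).mpr hv)]
    split_ifs <;> simp
  | add p q hp hq => rw [map_add, Polynomial.coeff_add, map_add, map_add, hp, hq]

end LineEval

end MvPolynomial

theorem FiniteField.X_pow_card_sub_X_eq_prod (F : Type*) [Field F] [Fintype F] :
    (Polynomial.X ^ Fintype.card F - Polynomial.X : Polynomial F) =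
      ∏ c : F, (Polynomial.X - Polynomial.C c) := by
  classical
  have hroots := FiniteField.roots_X_pow_card_sub_X F
  rw [← Polynomial.prod_multiset_X_sub_C_of_monic_of_roots_card_eq
    (Polynomial.monic_X_pow_sub (by rw [Polynomial.degree_X]; exact_mod_cast Fintype.one_lt_card))
    (by rw [hroots, X_pow_card_sub_X_natDegree_eq F Fintype.one_lt_card]; rfl), hroots]
  rfl

section FiniteField

variable {F R : Type*} [Field F] [Fintype F] [CommRing R] [IsDomain R] [Algebra F R]

theorem exists_algebraMap_eq_of_pow_card_eq_self {u : R} (hu : u ^ Fintype.card F = u) :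
    ∃ c : F, algebraMap F R c = u := by
  have h := congrArg (Polynomial.aeval u) (FiniteField.X_pow_card_sub_X_eq_prod F)
  simp only [map_sub, map_pow, Polynomial.aeval_X, hu, sub_self, map_prod,
    Polynomial.aeval_C] at h
  obtain ⟨c, -, hc⟩ := Finset.prod_eq_zero_iff.mp h.symm
  exact ⟨c, (sub_eq_zero.mp hc).symm⟩

theorem exists_eq_mul_algebraMap_of_mul_pow_card_eq {a b : R} (hb : b ≠ 0)
    (h : a * b ^ Fintype.card F = a ^ Fintype.card F * b) :
    ∃ c : F, a = b * algebraMap F R c := by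
  let L := FractionRing R
  have hb' : algebraMap R L b ≠ 0 := mt (IsFractionRing.to_map_eq_zero_iff).mp hb
  obtain ⟨c, hc⟩ := exists_algebraMap_eq_of_pow_card_eq_self (F := F)
    (u := algebraMap R L a / algebraMap R L b) (by
      rw [div_pow, div_eq_div_iff (pow_ne_zero _ hb') hb', ← map_pow, ← map_pow, ← map_mul,
        ← map_mul, h])
  refine ⟨c, IsFractionRing.injective R L ?_⟩
  rw [map_mul, ← IsScalarTower.algebraMap_apply, hc, mul_div_cancel₀ _ hb']

end FiniteField

theorem mem_projVanishingIdeal_iff {Y : Set (Fin s → K)} {f : MvPolynomial (Fin s) K} :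
    f ∈ projVanishingIdeal Y ↔ ∀ x ∈ Y, lineEval x f = 0 := by
  constructor
  · intro hf x hx
    refine (Ideal.span_le (I := RingHom.ker (lineEval x)).mpr ?_) hf
    rintro g ⟨⟨n, hg⟩, hgY⟩
    rw [SetLike.mem_coe, RingHom.mem_ker, lineEval_of_isHomogeneous hg, hgY x hx, map_zero,
      mul_zero]
  · intro h
    rw [← f.sum_homogeneousComponent]
    refine Ideal.sum_mem _ fun d _ =>
      Ideal.subset_span ⟨⟨d, homogeneousComponent_isHomogeneous d f⟩, fun x hx => ?_⟩
    rw [← coeff_lineEval, h x hx, Polynomial.coeff_zero]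

theorem projVanishingIdeal_isRadical (Y : Set (Fin s → K)) :
    (projVanishingIdeal Y).IsRadical := fun f ⟨n, hf⟩ =>
  mem_projVanishingIdeal_iff.mpr fun x hx => IsReduced.eq_zero _
    ⟨n, by rw [← map_pow]; exact mem_projVanishingIdeal_iff.mp hf x hx⟩

theorem binomial_mem_projVanishingIdeal [Fintype K] (Y : Set (Fin s → K)) (i j : Fin s) :
    X i * X j ^ Fintype.card K - X i ^ Fintype.card K * X j ∈ projVanishingIdeal Y := by
  have h₁ := (isHomogeneous_X K i).mul (isHomogeneous_X_pow j (Fintype.card K))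
  have h₂ := (isHomogeneous_X_pow (R := K) i (Fintype.card K)).mul (isHomogeneous_X K j)
  rw [add_comm] at h₁
  refine Ideal.subset_span ⟨⟨_, h₁.sub h₂⟩, fun x _ => ?_⟩
  simp [FiniteField.pow_card]

theorem colon_projVanishingIdeal_eq_self {Y : Set (Fin s → K)} {G : Set (MvPolynomial (Fin s) K)}
    (hG : ∀ g ∈ G, ∃ n, g.IsHomogeneous n) (hY : ∀ x ∈ Y, ∃ g ∈ G, eval x g ≠ 0) :
    (projVanishingIdeal Y).colon (Ideal.span G : Set (MvPolynomial (Fin s) K)) =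
      projVanishingIdeal Y := by
  refine le_antisymm (fun f hf => mem_projVanishingIdeal_iff.mpr fun x hx => ?_) Ideal.le_colon
  obtain ⟨g, hg, hgx⟩ := hY x hx
  obtain ⟨n, hgn⟩ := hG g hg
  have hfg := mem_projVanishingIdeal_iff.mp
    (Submodule.mem_colon.mp hf g (Ideal.subset_span hg)) x hx
  rw [smul_eq_mul, map_mul, lineEval_of_isHomogeneous hgn] at hfg
  exact (mul_eq_zero.mp hfg).resolve_right
    (mul_ne_zero (pow_ne_zero _ Polynomial.X_ne_zero) (Polynomial.C_ne_zero.mpr hgx))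

section Prime

variable [Fintype K] {G : Set (MvPolynomial (Fin s) K)} {P : Ideal (MvPolynomial (Fin s) K)}
  [P.IsPrime]

theorem exists_mk_X_eq_mul_algebraMap (hG : ∀ g ∈ G, ∃ n, g.IsHomogeneous n)
    (hbin : ∀ i j : Fin s, i < j → X i * X j ^ Fintype.card K - X i ^ Fintype.card K * X j ∈ P)
    (hGP : G ⊆ P) (hne : ∃ p : Fin s → K, p ≠ 0 ∧ ∀ g ∈ G, eval p g = 0) :
    ∃ (t : MvPolynomial (Fin s) K ⧸ P) (p : Fin s → K), (p ≠ 0 ∧ ∀ g ∈ G, eval p g = 0) ∧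
      ∀ i, Ideal.Quotient.mkₐ K P (X i) = t * algebraMap K _ (p i) := by
  by_cases hXP : ∀ i, X i ∈ P
  · obtain ⟨p, hp⟩ := hne
    exact ⟨0, p, hp, fun i => by simpa [Ideal.Quotient.eq_zero_iff_mem] using hXP i⟩
  push Not at hXP
  obtain ⟨k, hk⟩ := hXP
  set τ := fun i => Ideal.Quotient.mkₐ K P (X i)
  have hτk : τ k ≠ 0 := by simpa [τ, Ideal.Quotient.eq_zero_iff_mem] using hk
  have hrel : ∀ i, τ i * τ k ^ Fintype.card K = τ i ^ Fintype.card K * τ k := by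
    have hmk : ∀ i j, i < j → τ i * τ j ^ Fintype.card K = τ i ^ Fintype.card K * τ j :=
      fun i j hij => by simpa [τ] using Ideal.Quotient.eq.mpr (hbin i j hij)
    intro i
    rcases lt_trichotomy i k with h | rfl | h
    · exact hmk i k h
    · exact mul_comm _ _
    · linear_combination -hmk k i h
  choose p hp using fun i => exists_eq_mul_algebraMap_of_mul_pow_card_eq hτk (hrel i)
  have hpk : p k = 1 := (algebraMap K (MvPolynomial (Fin s) K ⧸ P)).injective <|
    ((mul_eq_left₀ hτk).mp (hp k).symm).trans (map_one _).symm
  refine ⟨τ k, p, ⟨fun h => by simp [h] at hpk, fun g hg => ?_⟩, hp⟩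
  obtain ⟨n, hgn⟩ := hG g hg
  have hg0 : Ideal.Quotient.mkₐ K P g = 0 := by simpa [Ideal.Quotient.eq_zero_iff_mem] using hGP hg
  rw [hgn.map_eq_pow_mul_algebraMap _ hp] at hg0
  exact (map_eq_zero_iff _ (algebraMap K (MvPolynomial (Fin s) K ⧸ P)).injective).mp
    ((mul_eq_zero.mp hg0).resolve_left (pow_ne_zero _ hτk))

theorem projVanishingIdeal_le_of_isPrime (hG : ∀ g ∈ G, ∃ n, g.IsHomogeneous n)
    (hbin : ∀ i j : Fin s, i < j → X i * X j ^ Fintype.card K - X i ^ Fintype.card K * X j ∈ P)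
    (hGP : G ⊆ P) (hne : ∃ p : Fin s → K, p ≠ 0 ∧ ∀ g ∈ G, eval p g = 0) :
    projVanishingIdeal { x : Fin s → K | x ≠ 0 ∧ ∀ g ∈ G, eval x g = 0 } ≤ P := by
  obtain ⟨t, p, hpX, hX⟩ := exists_mk_X_eq_mul_algebraMap hG hbin hGP hne
  refine Ideal.span_le.mpr ?_
  rintro f ⟨⟨n, hf⟩, hfX⟩
  rw [SetLike.mem_coe, ← Ideal.Quotient.eq_zero_iff_mem, ← Ideal.Quotient.mkₐ_eq_mk K,
    hf.map_eq_pow_mul_algebraMap _ hX, hfX p hpX, map_zero, mul_zero]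

end Prime

/-- A projective point of `ℙ^{s-1}` is encoded by the set of its nonzero representatives
in `K^s`. -/
theorem projective_nullstellensatz_finite_field [Fintype K]
    (G : Finset (MvPolynomial (Fin s) K))
    (hG : ∀ g ∈ G, g ≠ 0 ∧ ∃ n, g.IsHomogeneous n)
    (hcol : Submodule.colon (projVanishingIdeal { x : Fin s → K | x ≠ 0 })
        (Ideal.span (G : Set (MvPolynomial (Fin s) K))) ≠
      projVanishingIdeal { x : Fin s → K | x ≠ 0 }) :
    (Ideal.span ({ f | ∃ i j : Fin s, i < j ∧
          f = X i * X j ^ Fintype.card K - X i ^ Fintype.card K * X j } ∪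
        (G : Set (MvPolynomial (Fin s) K)))).radical =
      projVanishingIdeal { x : Fin s → K | x ≠ 0 ∧ ∀ g ∈ G, eval x g = 0 } := by
  have hGhom : ∀ g ∈ (G : Set (MvPolynomial (Fin s) K)), ∃ n, g.IsHomogeneous n :=
    fun g hg => (hG g hg).2
  have hne : ∃ p : Fin s → K, p ≠ 0 ∧ ∀ g ∈ G, eval p g = 0 := by
    by_contra! h
    exact hcol (colon_projVanishingIdeal_eq_self hGhom h)
  refine le_antisymm ?_ ?_
  · rw [(projVanishingIdeal_isRadical _).radical_le_iff, Ideal.span_le]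
    rintro f (⟨i, j, -, rfl⟩ | hf)
    · exact binomial_mem_projVanishingIdeal _ i j
    · exact Ideal.subset_span ⟨hGhom f hf, fun x hx => hx.2 f hf⟩
  · rw [Ideal.radical_eq_sInf]
    exact le_sInf fun P ⟨hJP, _⟩ => projVanishingIdeal_le_of_isPrime hGhom
      (fun i j hij => hJP (Ideal.subset_span (Or.inl ⟨i, j, hij, rfl⟩)))
      (fun g hg => hJP (Ideal.subset_span (Or.inr hg))) hne
end

section
/- Let $K = \mathbb{F}_q$ with $q \ge 3$, let $T = (K^*)^s$ be the affine torus, let $1 \le d < s$, and let $f$ be a nonzero element of $KV_d$, the $K$-linear span of the squarefree monomials of degree $d$. Then $|V_T(f)| \le (q-1)^{s} - (q-2)^d(q-1)^{s-d}$. -/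
open MvPolynomial
open scoped MonomialOrder

variable {K : Type*} [Field K] {s : ℕ}

/-!
Split off the first variable: since `f` has degree at most one in it,
`f(y, x) = h(x) + y g(x)` with `g`, `h` again squarefree and homogeneous.
If `g = 0`, every point `x` of the smaller torus with `h(x) ≠ 0` extends to `q - 1` nonzeros
of `f`; otherwise `g` has degree `d - 1`, and every `x` with `g(x) ≠ 0` extends to at least
`q - 2` nonzeros, since `y ↦ h(x) + y g(x)` has one root and `y = 0` is excluded.
By induction `f` has at least `(q-2)^d (q-1)^(s-d)` nonzeros on the torus.
-/

open Finset

lemma MvPolynomial.totalDegree_le_of_mem_restrictDegree {σ R : Type*} [Fintype σ]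
    [CommSemiring R] {m : ℕ} {f : MvPolynomial σ R} (hf : f ∈ restrictDegree σ R m) :
    f.totalDegree ≤ Fintype.card σ * m := by
  refine Finset.sup_le fun a ha => ?_
  change a.degree ≤ _
  rw [Finsupp.degree_eq_sum, ← smul_eq_mul, ← card_univ, ← sum_const]
  exact sum_le_sum fun i _ => (mem_restrictDegree _ _ _).mp hf a ha i

lemma MvPolynomial.degreeOf_le_of_mem_restrictDegree {σ R : Type*} [CommSemiring R] {m : ℕ}
    {f : MvPolynomial σ R} (hf : f ∈ restrictDegree σ R m) (i : σ) : degreeOf i f ≤ m :=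
  degreeOf_le_iff.mpr fun a ha => (mem_restrictDegree _ _ _).mp hf a ha i

lemma MvPolynomial.coeff_finSuccEquiv_mem_restrictDegree {R : Type*} [CommSemiring R] {n m : ℕ}
    {f : MvPolynomial (Fin (n + 1)) R} (hf : f ∈ restrictDegree (Fin (n + 1)) R m) (i : ℕ) :
    (finSuccEquiv R n f).coeff i ∈ restrictDegree (Fin n) R m := by
  rw [mem_restrictDegree] at hf ⊢
  intro a ha j
  simpa using hf _ (mem_support_coeff_finSuccEquiv.mp ha) j.succ

lemma MvPolynomial.finSuccEquiv_eq_of_degreeOf_zero_le_one {R : Type*} [CommRing R] {n : ℕ}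
    {f : MvPolynomial (Fin (n + 1)) R} (hf : degreeOf 0 f ≤ 1) :
    finSuccEquiv R n f = Polynomial.C ((finSuccEquiv R n f).coeff 1) * Polynomial.X +
      Polynomial.C ((finSuccEquiv R n f).coeff 0) :=
  Polynomial.eq_X_add_C_of_natDegree_le_one ((natDegree_finSuccEquiv f).trans_le hf)

lemma MvPolynomial.eval_cons_of_degreeOf_zero_le_one {R : Type*} [CommRing R] {n : ℕ}
    {f : MvPolynomial (Fin (n + 1)) R} (hf : degreeOf 0 f ≤ 1) (y : R) (x : Fin n → R) :
    eval (Fin.cons y x) f =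
      eval x ((finSuccEquiv R n f).coeff 0) + y * eval x ((finSuccEquiv R n f).coeff 1) := by
  conv_lhs => rw [eval_eq_eval_mv_eval', finSuccEquiv_eq_of_degreeOf_zero_le_one hf]
  simp only [Polynomial.map_add, Polynomial.map_mul, Polynomial.map_C, Polynomial.map_X,
    Polynomial.eval_add, Polynomial.eval_mul, Polynomial.eval_C, Polynomial.eval_X]
  ring

lemma card_filter_fin_cons_eq_sum {α : Type*} [Fintype α] {n : ℕ}
    (P : (Fin (n + 1) → α) → Prop) [DecidablePred P] :
    #{z | P z} = ∑ x : Fin n → α, #{y | P (Fin.cons y x)} := by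
  simp only [card_filter]
  rw [← (Fin.consEquiv fun _ => α).sum_comp, Fintype.sum_prod_type_right]
  rfl

lemma span_sqfreeMonomials_le (n d : ℕ) :
    Submodule.span K (sqfreeMonomials K n d) ≤
      restrictDegree (Fin n) K 1 ⊓ homogeneousSubmodule (Fin n) K d := by
  rw [Submodule.span_le]
  rintro _ ⟨a, ha1, had, rfl⟩
  refine ⟨(mem_restrictDegree _ _ _).mpr fun b hb i => ?_, isHomogeneous_monomial _ had⟩
  rw [mem_singleton.mp (support_monomial_subset hb)]
  exact ha1 i

section Torus

variable [Fintype K] [DecidableEq K]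

lemma card_filter_ne_zero : #{y : K | y ≠ 0} = Fintype.card K - 1 := by
  rw [filter_ne', card_erase_of_mem (mem_univ _), card_univ]

lemma card_sub_two_le_card_filter_ne_zero_and_add_mul_ne_zero {a b : K} (hb : b ≠ 0) :
    Fintype.card K - 2 ≤ #{y : K | y ≠ 0 ∧ a + y * b ≠ 0} := by
  have hsub : univ \ {0, -a / b} ⊆ ({y : K | y ≠ 0 ∧ a + y * b ≠ 0} : Finset K) := by
    intro y hy
    simp only [mem_sdiff, mem_univ, mem_insert, mem_singleton, not_or, true_and] at hy
    refine mem_filter.mpr ⟨mem_univ _, hy.1, fun h => hy.2 ?_⟩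
    field_simp
    linear_combination h
  calc Fintype.card K - 2 ≤ #(univ : Finset K) - #({0, -a / b} : Finset K) := by
        rw [card_univ]; exact Nat.sub_le_sub_left card_le_two _
    _ ≤ #(univ \ {0, -a / b}) := le_card_sdiff _ _
    _ ≤ _ := card_le_card hsub

lemma card_torus (n : ℕ) : #{x : Fin n → K | ∀ i, x i ≠ 0} = (Fintype.card K - 1) ^ n := by
  have : ({x : Fin n → K | ∀ i, x i ≠ 0} : Finset _) = Fintype.piFinset fun _ => {y | y ≠ 0} := by
    ext x; simp
  rw [this, Fintype.card_piFinset_const, card_filter_ne_zero]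

lemma card_torus_eval_eq_zero_add_card_torus_eval_ne_zero {n : ℕ} (f : MvPolynomial (Fin n) K) :
    #{x | (∀ i, x i ≠ 0) ∧ eval x f = 0} + #{x | (∀ i, x i ≠ 0) ∧ eval x f ≠ 0} =
      (Fintype.card K - 1) ^ n := by
  rw [← card_torus, ← filter_filter, ← filter_filter, card_filter_add_card_filter_not]

lemma mul_card_torus_eval_ne_zero_le {n : ℕ} (f : MvPolynomial (Fin (n + 1)) K)
    (p : MvPolynomial (Fin n) K) (k : ℕ)
    (hk : ∀ x : Fin n → K, (∀ i, x i ≠ 0) → eval x p ≠ 0 →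
      k ≤ #{y | y ≠ 0 ∧ eval (Fin.cons y x) f ≠ 0}) :
    k * #{x | (∀ i, x i ≠ 0) ∧ eval x p ≠ 0} ≤ #{z | (∀ i, z i ≠ 0) ∧ eval z f ≠ 0} := by
  rw [card_filter, mul_sum, card_filter_fin_cons_eq_sum]
  refine sum_le_sum fun x _ => ?_
  split_ifs with hx
  · simpa only [mul_one, Fin.forall_fin_succ, Fin.cons_zero, Fin.cons_succ, hx.1, ne_eq,
      not_false_eq_true, implies_true, and_true]
      using hk x hx.1 hx.2
  · exact (mul_zero k).trans_le (Nat.zero_le _)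

lemma card_sub_one_mul_le_card_torus_eval_ne_zero {n : ℕ} {f : MvPolynomial (Fin (n + 1)) K}
    (hf : degreeOf 0 f ≤ 1) (hg : (finSuccEquiv K n f).coeff 1 = 0) :
    (Fintype.card K - 1) * #{x | (∀ i, x i ≠ 0) ∧ eval x ((finSuccEquiv K n f).coeff 0) ≠ 0} ≤
      #{z | (∀ i, z i ≠ 0) ∧ eval z f ≠ 0} :=
  mul_card_torus_eval_ne_zero_le f _ _ fun x _ hx => by
    simp only [eval_cons_of_degreeOf_zero_le_one hf, hg, map_zero, mul_zero, add_zero, hx, ne_eq,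
      not_false_eq_true, and_true]
    exact card_filter_ne_zero.ge

lemma card_sub_two_mul_le_card_torus_eval_ne_zero {n : ℕ} {f : MvPolynomial (Fin (n + 1)) K}
    (hf : degreeOf 0 f ≤ 1) :
    (Fintype.card K - 2) * #{x | (∀ i, x i ≠ 0) ∧ eval x ((finSuccEquiv K n f).coeff 1) ≠ 0} ≤
      #{z | (∀ i, z i ≠ 0) ∧ eval z f ≠ 0} :=
  mul_card_torus_eval_ne_zero_le f _ _ fun x _ hx => by
    simpa only [eval_cons_of_degreeOf_zero_le_one hf] using
      card_sub_two_le_card_filter_ne_zero_and_add_mul_ne_zero hx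

theorem pow_mul_pow_le_card_torus_eval_ne_zero :
    ∀ {n d : ℕ} {f : MvPolynomial (Fin n) K}, f ∈ restrictDegree (Fin n) K 1 →
      f.IsHomogeneous d → f ≠ 0 →
      (Fintype.card K - 2) ^ d * (Fintype.card K - 1) ^ (n - d) ≤
        #{x | (∀ i, x i ≠ 0) ∧ eval x f ≠ 0}
  | 0, d, f, hf, hhom, hf0 => by
    have hd : d = 0 := by
      simpa [← hhom.totalDegree hf0] using totalDegree_le_of_mem_restrictDegree hf
    subst hd
    refine card_pos.mpr ⟨Fin.elim0, mem_filter.mpr ⟨mem_univ _, fun i => i.elim0, ?_⟩⟩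
    rw [eq_C_of_isEmpty f] at hf0 ⊢
    simpa using hf0
  | n + 1, d, f, hf, hhom, hf0 => by
    have hdeg0 := degreeOf_le_of_mem_restrictDegree hf 0
    have hlin := finSuccEquiv_eq_of_degreeOf_zero_le_one hdeg0
    set g := (finSuccEquiv K n f).coeff 1
    set h := (finSuccEquiv K n f).coeff 0
    by_cases hg : g = 0
    · have hh : h ≠ 0 := by
        intro hh
        apply hf0
        apply (finSuccEquiv K n).injective
        rw [hlin, hg, hh]
        simp
      have hhomh : h.IsHomogeneous d := hhom.finSuccEquiv_coeff_isHomogeneous 0 d (zero_add d)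
      have hrh := coeff_finSuccEquiv_mem_restrictDegree hf 0
      have hdn : d ≤ n := by
        simpa [← hhomh.totalDegree hh] using totalDegree_le_of_mem_restrictDegree hrh
      calc (Fintype.card K - 2) ^ d * (Fintype.card K - 1) ^ (n + 1 - d)
          = (Fintype.card K - 1) * ((Fintype.card K - 2) ^ d * (Fintype.card K - 1) ^ (n - d)) := by
            rw [Nat.sub_add_comm hdn, pow_succ]; ring
        _ ≤ (Fintype.card K - 1) * #{x | (∀ i, x i ≠ 0) ∧ eval x h ≠ 0} :=
            Nat.mul_le_mul_left _ (pow_mul_pow_le_card_torus_eval_ne_zero hrh hhomh hh)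
        _ ≤ _ := card_sub_one_mul_le_card_torus_eval_ne_zero hdeg0 hg
    · obtain ⟨e, rfl⟩ : ∃ e, d = e + 1 := by
        have := totalDegree_coeff_finSuccEquiv_add_le f 1 hg
        rw [hhom.totalDegree hf0] at this
        exact ⟨d - 1, by omega⟩
      have hhomg : g.IsHomogeneous e := hhom.finSuccEquiv_coeff_isHomogeneous 1 e (add_comm 1 e)
      have hrg := coeff_finSuccEquiv_mem_restrictDegree hf 1
      calc (Fintype.card K - 2) ^ (e + 1) * (Fintype.card K - 1) ^ (n + 1 - (e + 1))
          = (Fintype.card K - 2) * ((Fintype.card K - 2) ^ e * (Fintype.card K - 1) ^ (n - e)) := by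
            rw [Nat.add_sub_add_right, pow_succ]; ring
        _ ≤ (Fintype.card K - 2) * #{x | (∀ i, x i ≠ 0) ∧ eval x g ≠ 0} :=
            Nat.mul_le_mul_left _ (pow_mul_pow_le_card_torus_eval_ne_zero hrg hhomg hg)
        _ ≤ _ := card_sub_two_mul_le_card_torus_eval_ne_zero hdeg0

end Torus

theorem card_torus_zeros_squarefree_homogeneous_general [Fintype K] (d : ℕ)
    (f : MvPolynomial (Fin s) K) (hf : f ∈ Submodule.span K (sqfreeMonomials K s d))
    (hf0 : f ≠ 0) :
    ({ x : Fin s → K | (∀ i, x i ≠ 0) ∧ eval x f = 0 }).ncard ≤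
      (Fintype.card K - 1) ^ s -
        (Fintype.card K - 2) ^ d * (Fintype.card K - 1) ^ (s - d) := by
  classical
  obtain ⟨hrestrict, hhom⟩ := span_sqfreeMonomials_le s d hf
  have hbound := pow_mul_pow_le_card_torus_eval_ne_zero hrestrict hhom hf0
  have hsplit := card_torus_eval_eq_zero_add_card_torus_eval_ne_zero f
  rw [← coe_filter_univ, Set.ncard_coe_finset]
  omega

/-- Proposition: a nonzero homogeneous squarefree polynomial of degree `d < s` has at
most `(q-1)^s - (q-2)^d (q-1)^{s-d}` zeros in the torus `T = (K^*)^s`. -/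
theorem card_torus_zeros_squarefree_homogeneous [Fintype K]
    (hq : 3 ≤ Fintype.card K) (d : ℕ) (hd1 : 1 ≤ d) (hds : d < s)
    (f : MvPolynomial (Fin s) K) (hf : f ∈ Submodule.span K (sqfreeMonomials K s d))
    (hf0 : f ≠ 0) :
    ({ x : Fin s → K | (∀ i, x i ≠ 0) ∧ eval x f = 0 }).ncard ≤
      (Fintype.card K - 1) ^ s -
        (Fintype.card K - 2) ^ d * (Fintype.card K - 1) ^ (s - d) :=
  card_torus_zeros_squarefree_homogeneous_general d f hf hf0
end

section
/- Let $\mathcal{C}_\mathcal{P}(d)$ be the toric code of degree $d$ over the $d$-th hypersimplex of $\mathbb{R}^s$ ($s \ge 2$, $1 \le d \le s$) on the affine torus $T = (\mathbb{F}_q^*)^s$. Then the length of $\mathcal{C}_\mathcal{P}(d)$ is $(q-1)^s$, and its dimension is $\binom{s}{d}$ if $q \ge 3$ and $1$ if $q = 2$. -/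
open MvPolynomial
open scoped MonomialOrder

variable {K : Type*} [Field K] {s : ℕ}

/-!
The torus is `(Kˣ)^s`, so it has `(q-1)^s` points. On the torus the squarefree monomial
`∏_{i ∈ T} t_i` is the character `u ↦ ∏_{i ∈ T} u_i` of the group `(Kˣ)^s`. When `q ≥ 3`
there is a unit `c ≠ 1`, and evaluating at `c` in the `i`-th slot and `1` elsewhere
detects whether `i ∈ T`, so these characters are distinct; by Dedekind they are linearly independent and the
code has dimension `#{T : |T| = d} = C(s, d)`. When `q = 2` the torus is the single point
`(1, …, 1)`, where every monomial takes the value `1`.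
-/

open Finset

section Torus

variable [Fintype K]

@[simp]
lemma mem_torus {x : Fin s → K} : x ∈ torus K s ↔ ∀ i, x i ≠ 0 := by
  classical
  simp [torus]

variable (K s) in
def unitsEquivTorus : (Fin s → Kˣ) ≃ torus K s where
  toFun u := ⟨fun i => u i, mem_torus.2 fun i => (u i).ne_zero⟩
  invFun x i := Units.mk0 (x.1 i) (mem_torus.1 x.2 i)
  left_inv u := by ext; simp
  right_inv x := by ext; simp

lemma card_torus_s17 : (torus K s).card = (Fintype.card K - 1) ^ s := by
  classical
  rw [← Fintype.card_coe, ← Fintype.card_congr (unitsEquivTorus K s), Fintype.card_pi,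
    Fintype.card_units, prod_const, card_univ, Fintype.card_fin]

end Torus

section Squarefree

lemma sum_single_one_apply_le_one (T : Finset (Fin s)) (i : Fin s) :
    (∑ j ∈ T, Finsupp.single j 1 : Fin s →₀ ℕ) i ≤ 1 := by
  classical
  rw [Finsupp.finsetSum_apply]
  simp only [Finsupp.single_apply, sum_ite_eq']
  split_ifs <;> simp

lemma degree_sum_single_one (T : Finset (Fin s)) :
    (∑ j ∈ T, Finsupp.single j 1 : Fin s →₀ ℕ).degree = T.card := by
  simp [map_sum]

lemma sum_support_single_one {a : Fin s →₀ ℕ} (ha : ∀ i, a i ≤ 1) :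
    ∑ i ∈ a.support, Finsupp.single i 1 = a := by
  conv_rhs => rw [← Finsupp.sum_single a]
  refine sum_congr rfl fun i hi => ?_
  rw [show a i = 1 by have := Finsupp.mem_support_iff.1 hi; have := ha i; omega]

lemma monomial_sum_single_one (T : Finset (Fin s)) :
    monomial (∑ j ∈ T, Finsupp.single j 1) (1 : K) = ∏ j ∈ T, X j := by
  rw [monomial_sum_one]; rfl

lemma sqfreeMonomials_eq_range (d : ℕ) :
    sqfreeMonomials K s d = Set.range fun T : {T : Finset (Fin s) // T.card = d} =>
      ∏ i ∈ T.1, (X i : MvPolynomial (Fin s) K) := by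
  ext g
  constructor
  · rintro ⟨a, ha, rfl, rfl⟩
    refine ⟨⟨a.support, ?_⟩, ?_⟩
    · conv_rhs => rw [← sum_support_single_one ha]
      exact (degree_sum_single_one _).symm
    · exact (monomial_sum_single_one _).symm.trans (by rw [sum_support_single_one ha])
  · rintro ⟨⟨T, rfl⟩, rfl⟩
    exact ⟨_, sum_single_one_apply_le_one T, degree_sum_single_one T,
      (monomial_sum_single_one T).symm⟩

end Squarefree

section Characters

/-- The squarefree monomial `∏_{i ∈ T} t_i`, read on the torus `(Kˣ)^s`. -/
def sqfreeCharacter (T : Finset (Fin s)) : (Fin s → Kˣ) →* K where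
  toFun u := ∏ i ∈ T, (u i : K)
  map_one' := by simp
  map_mul' u v := by simp [prod_mul_distrib]

lemma sqfreeCharacter_mulSingle (T : Finset (Fin s)) (i : Fin s) (c : Kˣ) :
    sqfreeCharacter T (Pi.mulSingle i c) = if i ∈ T then (c : K) else 1 := by
  change ∏ j ∈ T, ((Pi.mulSingle (M := fun _ => Kˣ) i c j : Kˣ) : K) = _
  rw [← Units.coe_prod, prod_pi_mulSingle']
  split_ifs <;> rfl

lemma sqfreeCharacter_injective {c : Kˣ} (hc : c ≠ 1) :
    Function.Injective (sqfreeCharacter (K := K) (s := s)) := by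
  intro T T' h
  have hc' : (c : K) ≠ 1 := by simpa using hc
  ext i
  have := DFunLike.congr_fun h (Pi.mulSingle i c)
  rw [sqfreeCharacter_mulSingle, sqfreeCharacter_mulSingle] at this
  split_ifs at this <;> simp_all

end Characters

section ToricCode

variable [Fintype K]

variable (K s) in
/-- The toric code `C_𝒫(d)` of the `d`-th hypersimplex. -/
noncomputable def toricCode (d : ℕ) : Submodule K (torus K s → K) :=
  (Submodule.span K (sqfreeMonomials K s d)).map (evalMap (torus K s))

lemma evalMap_prod_X_unitsEquivTorus (T : Finset (Fin s)) (u : Fin s → Kˣ) :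
    evalMap (torus K s) (∏ i ∈ T, X i) (unitsEquivTorus K s u) = sqfreeCharacter T u := by
  simp [evalMap, unitsEquivTorus, sqfreeCharacter]

lemma exists_units_ne_one (hK : 2 < Fintype.card K) : ∃ c : Kˣ, c ≠ 1 := by
  classical
  exact Fintype.exists_ne_of_one_lt_card (by rw [Fintype.card_units]; omega) 1

/-- Dedekind's independence of characters, pulled back along `(Kˣ)^s ≃ T`. -/
lemma linearIndependent_evalMap_prod_X (hK : 2 < Fintype.card K) :
    LinearIndependent K fun T : Finset (Fin s) => evalMap (torus K s) (∏ i ∈ T, X i) := by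
  obtain ⟨c, hc⟩ := exists_units_ne_one hK
  refine LinearIndependent.of_comp (LinearMap.funLeft K K (unitsEquivTorus K s)) ?_
  have hchar : (LinearMap.funLeft K K (unitsEquivTorus K s) ∘
      fun T : Finset (Fin s) => evalMap (torus K s) (∏ i ∈ T, X i)) =
        fun T => ⇑(sqfreeCharacter T) := by
    ext T u
    exact evalMap_prod_X_unitsEquivTorus T u
  rw [hchar]
  exact (linearIndependent_monoidHom _ K).comp _ (sqfreeCharacter_injective hc)

lemma finrank_toricCode (hK : 2 < Fintype.card K) (d : ℕ) :
    Module.finrank K (toricCode K s d) = s.choose d := by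
  rw [toricCode, Submodule.map_span, sqfreeMonomials_eq_range, ← Set.range_comp]
  refine (finrank_span_eq_card
    ((linearIndependent_evalMap_prod_X hK).comp _ Subtype.val_injective)).trans ?_
  rw [Fintype.card_finset_len, Fintype.card_fin]

lemma toricCode_ne_bot {d : ℕ} (hds : d ≤ s) : toricCode K s d ≠ ⊥ := by
  obtain ⟨T, -, hT⟩ := exists_subset_card_eq (s := (univ : Finset (Fin s))) (by simpa using hds)
  have hmem : (∏ i ∈ T, X i : MvPolynomial (Fin s) K) ∈ sqfreeMonomials K s d := by
    rw [sqfreeMonomials_eq_range]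
    exact ⟨⟨T, hT⟩, rfl⟩
  refine (Submodule.ne_bot_iff _).2
    ⟨_, Submodule.mem_map_of_mem (Submodule.subset_span hmem), fun h => ?_⟩
  have := congr_fun h (unitsEquivTorus K s 1)
  simp [evalMap_prod_X_unitsEquivTorus, sqfreeCharacter] at this

lemma finrank_toricCode_of_card_eq_two (hK : Fintype.card K = 2) {d : ℕ} (hds : d ≤ s) :
    Module.finrank K (toricCode K s d) = 1 := by
  have hle : Module.finrank K (toricCode K s d) ≤ 1 := by
    simpa [Module.finrank_fintype_fun_eq_card, card_torus_s17, hK] using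
      Submodule.finrank_le (toricCode K s d)
  have hpos : Module.finrank K (toricCode K s d) ≠ 0 := by
    rw [Ne, Submodule.finrank_eq_zero]
    exact toricCode_ne_bot hds
  omega

end ToricCode

theorem length_and_dim_toric_code_hypersimplex_general (K : Type*) [Field K] [Fintype K]
    (s d : ℕ) (hds : d ≤ s) :
    (torus K s).card = (Fintype.card K - 1) ^ s ∧
    (3 ≤ Fintype.card K →
      Module.finrank K
          (↥((Submodule.span K (sqfreeMonomials K s d)).map (evalMap (torus K s)))) =
        Nat.choose s d) ∧
    (Fintype.card K = 2 →
      Module.finrank K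
          (↥((Submodule.span K (sqfreeMonomials K s d)).map (evalMap (torus K s)))) =
        1) :=
  ⟨card_torus_s17, fun hK => finrank_toricCode hK d,
    fun hK => finrank_toricCode_of_card_eq_two hK hds⟩

/-- Proposition (length and dimension of the toric code over the `d`-th
hypersimplex). -/
theorem length_and_dim_toric_code_hypersimplex (K : Type*) [Field K] [Fintype K]
    (s d : ℕ) (hs : 2 ≤ s) (hd1 : 1 ≤ d) (hds : d ≤ s) :
    (torus K s).card = (Fintype.card K - 1) ^ s ∧
    (3 ≤ Fintype.card K →
      Module.finrank K
          (↥((Submodule.span K (sqfreeMonomials K s d)).map (evalMap (torus K s)))) =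
        Nat.choose s d) ∧
    (Fintype.card K = 2 →
      Module.finrank K
          (↥((Submodule.span K (sqfreeMonomials K s d)).map (evalMap (torus K s)))) =
        1) :=
  length_and_dim_toric_code_hypersimplex_general K s d hds
end

section
/- Let $K = \mathbb{F}_q$ with $q \ge 3$, let $T = (K^*)^s$ be the affine torus, let $d \le s$, and let $f$ be a squarefree polynomial in $S \setminus K$ of degree at most $d$ (i.e., every monomial of $f$ is squarefree). Then $|V_T(f)| \le (q-1)^{s} - (q-2)^{d}(q-1)^{s-d}$, with equality if $d \ge 1$ and $f = (t_1-1)\cdots(t_d-1)$. -/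
open MvPolynomial
open scoped MonomialOrder

variable {K : Type*} [Field K] {s : ℕ}

section AuxProofs
open Finset

-- monotonicity helper
lemma aux_pow_mono {q a b m : ℕ} (hab : a ≤ b) (hbm : b ≤ m) :
    (q - 2) ^ b * (q - 1) ^ (m - b) ≤ (q - 2) ^ a * (q - 1) ^ (m - a) := by
  have e1 : (q-2)^b * (q-1)^(m-b) = (q-2)^a * ((q-2)^(b-a) * (q-1)^(m-b)) := by
    rw [← mul_assoc, ← pow_add, Nat.add_sub_cancel' hab]
  have e2 : (q-1)^(b-a) * (q-1)^(m-b) = (q-1)^(m-a) := by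
    rw [← pow_add]; congr 1; omega
  rw [e1, ← e2]
  exact Nat.mul_le_mul_left _ (Nat.mul_le_mul_right _ (Nat.pow_le_pow_left (by omega) _))

-- split the count over Fin (n+1) → K
lemma aux_card_split {n : ℕ} [Fintype K] (P : (Fin (n+1) → K) → Prop) [DecidablePred P] :
    (univ.filter P).card
      = ∑ t : K, (univ.filter fun y : Fin n → K => P (Fin.cons t y)).card := by
  simp only [Finset.card_filter]
  calc (∑ x : Fin (n+1) → K, if P x then 1 else 0)
      = ∑ z : K × (Fin n → K), if P (Fin.cons z.1 z.2) then 1 else 0 := by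
        apply Fintype.sum_equiv (Fin.consEquiv (fun _ : Fin (n+1) => K)).symm
        intro x
        simp only [Fin.consEquiv_symm_apply, Fin.cons_self_tail]
    _ = _ := Fintype.sum_prod_type _

-- product count
lemma aux_card_pi {s : ℕ} [Fintype K] [DecidableEq K] (P : Fin s → K → Prop)
    [∀ i k, Decidable (P i k)] :
    (univ.filter fun x : Fin s → K => ∀ i, P i (x i)).card
      = ∏ i, (univ.filter fun k => P i k).card := by
  rw [← Fintype.card_piFinset]
  congr 1
  ext x
  simp [Fintype.mem_piFinset]

lemma aux_card_ne_zero [Fintype K] [DecidableEq K] :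
    (univ.filter fun k : K => k ≠ 0).card = Fintype.card K - 1 := by
  rw [Finset.filter_ne', Finset.card_erase_of_mem (mem_univ _), Finset.card_univ]

lemma aux_card_ne_zero_one [Fintype K] [DecidableEq K] :
    (univ.filter fun k : K => k ≠ 0 ∧ k ≠ 1).card = Fintype.card K - 2 := by
  have h : (univ.filter fun k : K => k ≠ 0 ∧ k ≠ 1) = univ \ {0, 1} := by
    ext k; simp [not_or, and_comm]
  rw [h, Finset.card_sdiff_of_subset (Finset.subset_univ _), Finset.card_univ,
    Finset.card_pair (zero_ne_one)]

lemma aux_card_linear [Fintype K] [DecidableEq K] (G H : K) (hG : G ≠ 0) :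
    Fintype.card K - 2 ≤ (univ.filter fun t : K => t ≠ 0 ∧ G * t + H ≠ 0).card := by
  have hsub : (univ.filter fun t : K => ¬(t ≠ 0 ∧ G * t + H ≠ 0)) ⊆ {0, -H * G⁻¹} := by
    intro t ht
    simp only [Finset.mem_filter, not_and_or, not_not] at ht
    rcases ht.2 with h | h
    · simp [h]
    · have : t = -H * G⁻¹ := by field_simp; linear_combination h
      simp [this]
  have h2 : (univ.filter fun t : K => ¬(t ≠ 0 ∧ G * t + H ≠ 0)).card ≤ 2 := by
    calc _ ≤ ({0, -H * G⁻¹} : Finset K).card := Finset.card_le_card hsub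
      _ ≤ 2 := Finset.card_insert_le _ _ |>.trans (by simp)
  have h3 := Finset.card_filter_add_card_filter_not
    (s := (univ : Finset K)) (p := fun t : K => t ≠ 0 ∧ G * t + H ≠ 0)
  rw [Finset.card_univ] at h3
  omega

lemma aux_sqfree_totalDegree {n : ℕ} (f : MvPolynomial (Fin n) K)
    (hsf : ∀ a ∈ f.support, ∀ i, a i ≤ 1) : f.totalDegree ≤ n := by
  apply Finset.sup_le
  intro a ha
  calc (a.sum fun _ e => e) = ∑ i ∈ a.support, a i := rfl
    _ ≤ ∑ i : Fin n, a i := Finset.sum_le_sum_of_subset (Finset.subset_univ _)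
    _ ≤ ∑ _i : Fin n, 1 := Finset.sum_le_sum (fun i _ => hsf a ha i)
    _ = n := by simp

lemma aux_key [Fintype K] [DecidableEq K] (hq : 3 ≤ Fintype.card K) :
    ∀ (n : ℕ) (d : ℕ), d ≤ n → ∀ f : MvPolynomial (Fin n) K, f ≠ 0 →
    (∀ a ∈ f.support, ∀ i, a i ≤ 1) → f.totalDegree ≤ d →
    (Fintype.card K - 2) ^ d * (Fintype.card K - 1) ^ (n - d) ≤
      (univ.filter fun x : Fin n → K => (∀ i, x i ≠ 0) ∧ eval x f ≠ 0).card := by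
  classical
  intro n
  induction n with
  | zero =>
    intro d hd f hf hsf hdeg
    interval_cases d
    simp only [pow_zero, one_mul, Nat.sub_zero]
    obtain ⟨c, rfl⟩ := C_surjective (Fin 0) f
    have hc : c ≠ 0 := fun h0 => hf (by rw [h0, map_zero])
    exact Finset.card_pos.mpr ⟨default, by simp [hc]⟩
  | succ n ih =>
    intro d hd f hf hsf hdeg
    set q := Fintype.card K with hqdef
    set p := finSuccEquiv K n f with hpdef
    have hp0 : p ≠ 0 := by
      rw [hpdef, Ne, EmbeddingLike.map_eq_zero_iff]
      exact hf
    have hdegp : p.natDegree ≤ 1 := by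
      rw [hpdef, natDegree_finSuccEquiv]
      exact degreeOf_le_iff.mpr fun a ha => hsf a ha 0
    set g := p.coeff 1 with hgdef
    set h := p.coeff 0 with hhdef
    have hpeq : p = Polynomial.C g * Polynomial.X + Polynomial.C h :=
      Polynomial.eq_X_add_C_of_degree_le_one (Polynomial.natDegree_le_iff_degree_le.mp hdegp)
    have heval : ∀ (t : K) (y : Fin n → K),
        eval (Fin.cons t y) f = eval y g * t + eval y h := by
      intro t y
      rw [eval_eq_eval_mv_eval' y t f, ← hpdef]
      conv_lhs => rw [hpeq]
      simp only [Polynomial.map_add, Polynomial.map_mul, Polynomial.map_C, Polynomial.map_X,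
        Polynomial.eval_add, Polynomial.eval_mul, Polynomial.eval_C, Polynomial.eval_X]
    have hsfc : ∀ i : ℕ, ∀ a ∈ (p.coeff i).support, ∀ j, a j ≤ 1 := by
      intro i a ha j
      rw [hpdef, mem_support_coeff_finSuccEquiv] at ha
      have := hsf _ ha j.succ
      rwa [Finsupp.cons_succ] at this
    have hcons : ∀ (t : K) (y : Fin n → K),
        ((∀ i, (Fin.cons t y : Fin (n+1) → K) i ≠ 0) ↔ (t ≠ 0 ∧ ∀ i, y i ≠ 0)) := by
      intro t y
      rw [Fin.forall_fin_succ]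
      simp
    have hPiff : ∀ (t : K) (y : Fin n → K),
        (((∀ i, (Fin.cons t y : Fin (n+1) → K) i ≠ 0) ∧ eval (Fin.cons t y : Fin (n+1) → K) f ≠ 0) ↔
          ((t ≠ 0 ∧ ∀ i, y i ≠ 0) ∧ eval y g * t + eval y h ≠ 0)) := by
      intro t y
      rw [hcons, heval]
    rw [aux_card_split]
    have hsum : ∀ t : K,
        (univ.filter fun y : Fin n → K =>
          (∀ i, (Fin.cons t y : Fin (n+1) → K) i ≠ 0) ∧ eval (Fin.cons t y : Fin (n+1) → K) f ≠ 0)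
        = (univ.filter fun y : Fin n → K =>
          (t ≠ 0 ∧ ∀ i, y i ≠ 0) ∧ eval y g * t + eval y h ≠ 0) := by
      intro t
      exact Finset.filter_congr fun y _ => hPiff t y
    simp only [hsum]
    by_cases hg : g = 0
    · -- case: variable 0 does not occur
      have hh : h ≠ 0 := by
        intro h0
        exact hp0 (by rw [hpeq, hg, h0]; simp)
      have hdegh : h.totalDegree ≤ min d n := by
        refine le_min ?_ (aux_sqfree_totalDegree _ (hsfc 0))
        have := totalDegree_coeff_finSuccEquiv_add_le f 0 (by rw [← hpdef, ← hhdef]; exact hh)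
        rw [← hpdef, ← hhdef] at this
        omega
      have hIH := ih (min d n) (min_le_right _ _) h hh (hsfc 0) hdegh
      set Nh := (univ.filter fun y : Fin n → K => (∀ i, y i ≠ 0) ∧ eval y h ≠ 0).card with hNh
      have hinner : ∀ t : K,
          (univ.filter fun y : Fin n → K =>
            (t ≠ 0 ∧ ∀ i, y i ≠ 0) ∧ eval y g * t + eval y h ≠ 0).card
          = if t = 0 then 0 else Nh := by
        intro t
        split_ifs with ht
        · rw [Finset.card_eq_zero, Finset.filter_eq_empty_iff]
          intro y _
          simp [ht]
        · rw [hNh]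
          congr 1
          apply Finset.filter_congr
          intro y _
          simp [hg, ht]
      simp only [hinner]
      rw [Finset.sum_ite, Finset.sum_const, Finset.sum_const, smul_eq_mul, smul_eq_mul,
        mul_zero, zero_add]
      have hcard : (univ.filter fun t : K => ¬ t = 0).card = q - 1 := aux_card_ne_zero
      rw [hcard]
      calc (q-2)^d * (q-1)^(n+1-d)
          ≤ (q-2)^(min d n) * (q-1)^(n+1-(min d n)) :=
            aux_pow_mono (min_le_left _ _) hd
        _ = (q-1) * ((q-2)^(min d n) * (q-1)^(n-(min d n))) := by
            rw [Nat.succ_sub (min_le_right d n), pow_succ]; ring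
        _ ≤ (q-1) * Nh := Nat.mul_le_mul_left _ hIH
    · -- case: variable 0 occurs
      have hd1 : 1 ≤ d := by
        have := totalDegree_coeff_finSuccEquiv_add_le f 1 (by rw [← hpdef, ← hgdef]; exact hg)
        omega
      have hdegg : g.totalDegree ≤ min (d-1) n := by
        refine le_min ?_ (aux_sqfree_totalDegree _ (hsfc 1))
        have := totalDegree_coeff_finSuccEquiv_add_le f 1 (by rw [← hpdef, ← hgdef]; exact hg)
        rw [← hpdef, ← hgdef] at this
        omega
      have hIH := ih (min (d-1) n) (min_le_right _ _) g hg (hsfc 1) hdegg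
      set Ng := (univ.filter fun y : Fin n → K => (∀ i, y i ≠ 0) ∧ eval y g ≠ 0).card with hNg
      -- swap the double sum
      have hswap : ∑ t : K, (univ.filter fun y : Fin n → K =>
            (t ≠ 0 ∧ ∀ i, y i ≠ 0) ∧ eval y g * t + eval y h ≠ 0).card
          = ∑ y : Fin n → K, (univ.filter fun t : K =>
            (t ≠ 0 ∧ ∀ i, y i ≠ 0) ∧ eval y g * t + eval y h ≠ 0).card := by
        simp only [Finset.card_filter]
        exact Finset.sum_comm
      rw [hswap]
      have hperel : ∀ y ∈ (univ.filter fun y : Fin n → K => (∀ i, y i ≠ 0) ∧ eval y g ≠ 0),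
          q - 2 ≤ (univ.filter fun t : K =>
            (t ≠ 0 ∧ ∀ i, y i ≠ 0) ∧ eval y g * t + eval y h ≠ 0).card := by
        intro y hy
        rw [Finset.mem_filter] at hy
        obtain ⟨-, hy1, hy2⟩ := hy
        have heq : (univ.filter fun t : K =>
            (t ≠ 0 ∧ ∀ i, y i ≠ 0) ∧ eval y g * t + eval y h ≠ 0)
            = univ.filter fun t : K => t ≠ 0 ∧ eval y g * t + eval y h ≠ 0 :=
          Finset.filter_congr fun t _ => by tauto
        rw [heq]
        exact aux_card_linear _ _ hy2
      have hbound : Ng * (q - 2) ≤ ∑ y : Fin n → K, (univ.filter fun t : K =>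
            (t ≠ 0 ∧ ∀ i, y i ≠ 0) ∧ eval y g * t + eval y h ≠ 0).card := by
        rw [hNg, ← smul_eq_mul, ← Finset.sum_const]
        exact le_trans (Finset.sum_le_sum hperel)
          (Finset.sum_le_sum_of_subset (Finset.subset_univ _))
      have hmin1 : min (d-1) n + 1 ≤ d := by
        have h1 : min (d-1) n ≤ d - 1 := min_le_left _ _
        rw [← Nat.succ_pred_eq_of_pos hd1]
        exact Nat.succ_le_succ h1
      have hmin2 : d ≤ n + 1 := hd
      calc (q-2)^d * (q-1)^(n+1-d)
          ≤ (q-2)^(min (d-1) n + 1) * (q-1)^(n+1-(min (d-1) n + 1)) :=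
            aux_pow_mono hmin1 hmin2
        _ = ((q-2)^(min (d-1) n) * (q-1)^(n-(min (d-1) n))) * (q-2) := by
            rw [Nat.succ_sub_succ, pow_succ]; ring
        _ ≤ Ng * (q-2) := Nat.mul_le_mul_right _ hIH
        _ ≤ _ := hbound

lemma aux_card_fin_lt {s d : ℕ} (hds : d ≤ s) :
    (univ.filter fun j : Fin s => (j : ℕ) < d).card = d := by
  have hmap : (univ.filter fun j : Fin s => (j : ℕ) < d)
      = Finset.map (Fin.castLEEmb hds) univ := by
    ext j
    simp only [Finset.mem_filter, Finset.mem_map, Finset.mem_univ, true_and]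
    constructor
    · intro hj
      exact ⟨⟨(j : ℕ), hj⟩, by ext; simp⟩
    · rintro ⟨i, rfl⟩
      simpa using i.isLt
  rw [hmap, Finset.card_map, Finset.card_univ, Fintype.card_fin]

lemma aux_torus_card {s : ℕ} [Fintype K] [DecidableEq K] :
    (univ.filter fun x : Fin s → K => ∀ i, x i ≠ 0).card = (Fintype.card K - 1) ^ s := by
  have h := aux_card_pi (K := K) (s := s) (fun _ k => k ≠ 0)
  simp only [aux_card_ne_zero, Finset.prod_const, Finset.card_univ, Fintype.card_fin] at h
  convert h using 2


end AuxProofs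

section
open Finset

/-- Proposition: a nonconstant squarefree polynomial of degree at most `d ≤ s` has at
most `(q-1)^s - (q-2)^d (q-1)^{s-d}` zeros in the torus, with equality for
`f = (t₁-1)⋯(t_d-1)` when `d ≥ 1`. -/
theorem card_torus_zeros_squarefree [Fintype K]
    (hq : 3 ≤ Fintype.card K) (d : ℕ) (hds : d ≤ s)
    (f : MvPolynomial (Fin s) K)
    (hsf : ∀ a ∈ f.support, ∀ i, a i ≤ 1)
    (hnc : ∀ c : K, f ≠ C c)
    (hdeg : f.totalDegree ≤ d) :
    ({ x : Fin s → K | (∀ i, x i ≠ 0) ∧ eval x f = 0 }).ncard ≤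
      (Fintype.card K - 1) ^ s -
        (Fintype.card K - 2) ^ d * (Fintype.card K - 1) ^ (s - d) ∧
    (1 ≤ d →
      f = ∏ j ∈ Finset.univ.filter (fun j : Fin s => (j : ℕ) < d),
            (X j - 1 : MvPolynomial (Fin s) K) →
      ({ x : Fin s → K | (∀ i, x i ≠ 0) ∧ eval x f = 0 }).ncard =
        (Fintype.card K - 1) ^ s -
          (Fintype.card K - 2) ^ d * (Fintype.card K - 1) ^ (s - d)) := by
  classical
  have hf0 : f ≠ 0 := by
    have := hnc 0
    rwa [map_zero] at this
  have hset : ({ x : Fin s → K | (∀ i, x i ≠ 0) ∧ eval x f = 0 }).ncard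
      = (univ.filter fun x : Fin s → K => (∀ i, x i ≠ 0) ∧ eval x f = 0).card := by
    rw [← Set.ncard_coe_finset]
    congr 1
    ext x
    simp
  have hpart : (univ.filter fun x : Fin s → K => (∀ i, x i ≠ 0) ∧ eval x f = 0).card
      + (univ.filter fun x : Fin s → K => (∀ i, x i ≠ 0) ∧ eval x f ≠ 0).card
      = (Fintype.card K - 1) ^ s := by
    have h := Finset.card_filter_add_card_filter_not
      (s := univ.filter fun x : Fin s → K => ∀ i, x i ≠ 0)
      (p := fun x => eval x f = 0)
    rw [Finset.filter_filter, Finset.filter_filter, aux_torus_card] at h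
    convert h using 3 <;> ext x <;> tauto
  constructor
  · have hkey := aux_key hq s d hds f hf0 hsf hdeg
    rw [hset, eq_tsub_of_add_eq hpart]
    exact Nat.sub_le_sub_left hkey _
  · intro hd1 hfeq
    have heval : ∀ x : Fin s → K,
        eval x f = ∏ j ∈ univ.filter (fun j : Fin s => (j : ℕ) < d), (x j - 1) := by
      intro x
      rw [hfeq, map_prod]
      simp
    have hiff : ∀ x : Fin s → K, ((∀ i, x i ≠ 0) ∧ eval x f ≠ 0) ↔
        (∀ i, x i ≠ 0 ∧ ((i : ℕ) < d → x i ≠ 1)) := by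
      intro x
      rw [heval x, Finset.prod_ne_zero_iff]
      constructor
      · rintro ⟨h1, h2⟩ i
        refine ⟨h1 i, fun hid hx1 => ?_⟩
        have := h2 i (by simp [hid])
        apply this
        rw [hx1]
        ring
      · intro hA
        refine ⟨fun i => (hA i).1, fun j hj => ?_⟩
        have hjd : (j : ℕ) < d := by simpa using hj
        exact sub_ne_zero.mpr ((hA j).2 hjd)
    have hnz : (univ.filter fun x : Fin s → K => (∀ i, x i ≠ 0) ∧ eval x f ≠ 0).card
        = (Fintype.card K - 2) ^ d * (Fintype.card K - 1) ^ (s - d) := by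
      rw [Finset.filter_congr (fun x _ => hiff x)]
      have hpi := aux_card_pi (K := K) (s := s) (fun i k => k ≠ 0 ∧ ((i : ℕ) < d → k ≠ 1))
      rw [show (univ.filter fun x : Fin s → K => ∀ i, x i ≠ 0 ∧ ((i : ℕ) < d → x i ≠ 1)).card
          = ∏ i : Fin s, (univ.filter fun k : K => k ≠ 0 ∧ ((i : ℕ) < d → k ≠ 1)).card
        from by convert hpi using 2]
      rw [← Finset.prod_filter_mul_prod_filter_not univ (fun i : Fin s => (i : ℕ) < d)]
      have c1 : ∀ i ∈ univ.filter (fun i : Fin s => (i : ℕ) < d),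
          (univ.filter fun k : K => k ≠ 0 ∧ ((i : ℕ) < d → k ≠ 1)).card
            = Fintype.card K - 2 := by
        intro i hi
        rw [Finset.mem_filter] at hi
        have : (univ.filter fun k : K => k ≠ 0 ∧ ((i : ℕ) < d → k ≠ 1))
            = univ.filter fun k : K => k ≠ 0 ∧ k ≠ 1 :=
          Finset.filter_congr fun k _ => by tauto
        rw [this, aux_card_ne_zero_one]
      have c2 : ∀ i ∈ univ.filter (fun i : Fin s => ¬ (i : ℕ) < d),
          (univ.filter fun k : K => k ≠ 0 ∧ ((i : ℕ) < d → k ≠ 1)).card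
            = Fintype.card K - 1 := by
        intro i hi
        rw [Finset.mem_filter] at hi
        have : (univ.filter fun k : K => k ≠ 0 ∧ ((i : ℕ) < d → k ≠ 1))
            = univ.filter fun k : K => k ≠ 0 :=
          Finset.filter_congr fun k _ => by tauto
        rw [this, aux_card_ne_zero]
      rw [Finset.prod_congr rfl c1, Finset.prod_congr rfl c2,
        Finset.prod_const, Finset.prod_const, aux_card_fin_lt hds]
      have h := Finset.card_filter_add_card_filter_not
        (s := (univ : Finset (Fin s))) (p := fun i : Fin s => (i : ℕ) < d)
      rw [Finset.card_univ, Fintype.card_fin, aux_card_fin_lt hds] at h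
      have hc : (univ.filter fun i : Fin s => ¬ (i : ℕ) < d).card = s - d := by
        rw [Nat.add_comm] at h
        exact eq_tsub_of_add_eq h
      rw [hc]
    rw [hset, eq_tsub_of_add_eq hpart, hnz]

end
end
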